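/- Let A = K[[f_1,…,f_s]] ⊆ F = K[[x_1,…,x_n]] with the length of F/A as an A-module finite, let a ∈ (ℝ_{>0})^n, and let {g_1,…,g_r} be an a-reduced canonical basis of A. Then in(A,a) is multihomogeneous (i.e., generated as a closed K-subalgebra by monomials) if and only if in(g_i,a) is a monomial for every i ∈ {1,…,r}. -/

import Mathlib

/-!
Two facts about initial forms drive the proof: `f ↦ in(f,a)` is multiplicative, and the
weight-`w` component of any element of `in(A,a)` is the initial form of an element of `A`.
For the latter, approximate the element by a polynomial in initial forms; since initial forms
form a monoid, this is a linear combination of initial forms, and the summands of weight `w`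
add up to the initial form of the corresponding combination of elements of `A`.

If `in(A,a)` is generated by monomials, every monomial `x^α` occurring in `in(g_i,a)` lies in
`in(A,a)`, so it is the initial form, hence the leading monomial, of some element of `A`. For
`α ≠ exp(g_i,a)` this contradicts reducedness, so `in(g_i,a)` has a single term.

Conversely, if every `in(g_i,a)` is a monomial, products of the `g_i` have, up to scalars, the
initial forms `x^β` for all `β` in the monoid generated by the `exp(g_i,a)`, and this monoid
contains `exp(f,a)` for every `f ∈ A`. Subtracting a multiple of such a product from `f` removes the leading term of
`in(f,a)` without creating new ones, so `in(f,a)` lies in the algebra generated by the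
`in(g_i,a)`.
-/

noncomputable section

namespace CanonicalFan

open MvPowerSeries

variable (K : Type*) [Field K] (n : ℕ)

/-- The weight `⟨a, α⟩ = ∑ i, a i * α i` of an exponent `α` with respect to `a`. -/
def weight (a : Fin n → ℝ) (α : Fin n →₀ ℕ) : ℝ := ∑ i, a i * (α i : ℝ)

/-- The support of a formal power series. -/
def supp (f : MvPowerSeries (Fin n) K) : Set (Fin n →₀ ℕ) :=
  {α | MvPowerSeries.coeff α f ≠ 0}

/-- The `a`-valuation `ν(f,a)`, with the convention `ν(0,a) = +∞`. -/
def nu (a : Fin n → ℝ) (f : MvPowerSeries (Fin n) K) : EReal :=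
  sInf ((fun α => ((weight n a α : ℝ) : EReal)) '' supp K n f)

open Classical in
/-- The `a`-initial form `in(f,a)` of a power series. -/
def initialForm (a : Fin n → ℝ) (f : MvPowerSeries (Fin n) K) :
    MvPowerSeries (Fin n) K :=
  fun α => if ((weight n a α : ℝ) : EReal) = nu K n a f then MvPowerSeries.coeff α f else 0

open Classical in
/-- `exp(f,a)`: the `≺`-maximal element of the support of `in(f,a)`, where `≺` is the
well-ordering `r` (junk value `0` if no maximal element exists). -/
def exponent (r : (Fin n →₀ ℕ) → (Fin n →₀ ℕ) → Prop) (a : Fin n → ℝ)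
    (f : MvPowerSeries (Fin n) K) : Fin n →₀ ℕ :=
  if h : ∃ β ∈ supp K n (initialForm K n a f),
      ∀ γ ∈ supp K n (initialForm K n a f), γ = β ∨ r γ β
  then h.choose else 0

/-- The `a`-leading monomial `M(f,a) = c_{exp(f,a)} x^{exp(f,a)}`. -/
def leadMon (r : (Fin n →₀ ℕ) → (Fin n →₀ ℕ) → Prop) (a : Fin n → ℝ)
    (f : MvPowerSeries (Fin n) K) : MvPowerSeries (Fin n) K :=
  MvPowerSeries.monomial (exponent K n r a f)
    (MvPowerSeries.coeff (exponent K n r a f) f)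

/-- The maximal ideal `(x_1, …, x_n)` of `K[[x_1,…,x_n]]`. -/
def mIdeal : Ideal (MvPowerSeries (Fin n) K) :=
  Ideal.span (Set.range (MvPowerSeries.X : Fin n → MvPowerSeries (Fin n) K))

/-- `K[[S]]`: the smallest `K`-subalgebra of `K[[x_1,…,x_n]]` containing `S` and closed in
the `(x_1,…,x_n)`-adic topology; concretely, the adic closure of `Algebra.adjoin K S`. -/
def closedAdjoin (S : Set (MvPowerSeries (Fin n) K)) :
    Subalgebra K (MvPowerSeries (Fin n) K) where
  carrier := {f | ∀ N : ℕ, ∃ g ∈ Algebra.adjoin K S, f - g ∈ (mIdeal K n) ^ N}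
  algebraMap_mem' c N :=
    ⟨algebraMap K _ c, Subalgebra.algebraMap_mem _ c, by simp [Ideal.zero_mem]⟩
  add_mem' {f g} hf hg N := by
    obtain ⟨p, hp, hfp⟩ := hf N
    obtain ⟨q, hq, hgq⟩ := hg N
    exact ⟨p + q, add_mem hp hq, by simpa [add_sub_add_comm] using Ideal.add_mem _ hfp hgq⟩
  mul_mem' {f g} hf hg N := by
    obtain ⟨p, hp, hfp⟩ := hf N
    obtain ⟨q, hq, hgq⟩ := hg N
    refine ⟨p * q, mul_mem hp hq, ?_⟩
    have h : f * g - p * q = f * (g - q) + (f - p) * q := by ring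
    rw [h]
    exact Ideal.add_mem _ (Ideal.mul_mem_left _ _ hgq) (Ideal.mul_mem_right _ _ hfp)

/-- `exp(A,a) = {exp(f,a) : f ∈ A, f ≠ 0}`. -/
def expSet (r : (Fin n →₀ ℕ) → (Fin n →₀ ℕ) → Prop) (a : Fin n → ℝ)
    (A : Set (MvPowerSeries (Fin n) K)) : Set (Fin n →₀ ℕ) :=
  {β | ∃ f ∈ A, f ≠ 0 ∧ exponent K n r a f = β}

/-- `in(A,a) = K[[in(f,a) : f ∈ A ∖ {0}]]`. -/
def inAlgebra (a : Fin n → ℝ) (A : Set (MvPowerSeries (Fin n) K)) :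
    Subalgebra K (MvPowerSeries (Fin n) K) :=
  closedAdjoin K n {g | ∃ f ∈ A, f ≠ 0 ∧ initialForm K n a f = g}

/-- `M(A,a) = K[[M(f,a) : f ∈ A ∖ {0}]]`. -/
def leadAlgebra (r : (Fin n →₀ ℕ) → (Fin n →₀ ℕ) → Prop) (a : Fin n → ℝ)
    (A : Set (MvPowerSeries (Fin n) K)) : Subalgebra K (MvPowerSeries (Fin n) K) :=
  closedAdjoin K n {g | ∃ f ∈ A, f ≠ 0 ∧ leadMon K n r a f = g}

set_option synthInstance.maxHeartbeats 1000000 in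
/-- The length of `F/A` as an `A`-module is finite. -/
def FiniteColength (A : Subalgebra K (MvPowerSeries (Fin n) K)) : Prop :=
  IsFiniteLength A
    (MvPowerSeries (Fin n) K ⧸ LinearMap.range (Algebra.linearMap A (MvPowerSeries (Fin n) K)))

/-- `{g_1,…,g_r}` is an `a`-canonical basis of `A`. -/
def IsCanonicalBasis (r : (Fin n →₀ ℕ) → (Fin n →₀ ℕ) → Prop) (a : Fin n → ℝ)
    (A : Subalgebra K (MvPowerSeries (Fin n) K)) {m : ℕ}
    (g : Fin m → MvPowerSeries (Fin n) K) : Prop :=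
  (∀ i, g i ∈ A ∧ g i ≠ 0) ∧
    leadAlgebra K n r a (A : Set (MvPowerSeries (Fin n) K)) =
      closedAdjoin K n (Set.range fun i => leadMon K n r a (g i))

/-- `{g_1,…,g_r}` is a minimal `a`-canonical basis of `A`. -/
def IsMinimalCanonicalBasis (r : (Fin n →₀ ℕ) → (Fin n →₀ ℕ) → Prop) (a : Fin n → ℝ)
    (A : Subalgebra K (MvPowerSeries (Fin n) K)) {m : ℕ}
    (g : Fin m → MvPowerSeries (Fin n) K) : Prop :=
  IsCanonicalBasis K n r a A g ∧
    ∀ T : Set (MvPowerSeries (Fin n) K),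
      T ⊂ Set.range (fun i => leadMon K n r a (g i)) →
        closedAdjoin K n T ≠ leadAlgebra K n r a (A : Set (MvPowerSeries (Fin n) K))

/-- `{g_1,…,g_r}` is the `a`-reduced canonical basis of `A`. -/
def IsReducedCanonicalBasis (r : (Fin n →₀ ℕ) → (Fin n →₀ ℕ) → Prop) (a : Fin n → ℝ)
    (A : Subalgebra K (MvPowerSeries (Fin n) K)) {m : ℕ}
    (g : Fin m → MvPowerSeries (Fin n) K) : Prop :=
  IsMinimalCanonicalBasis K n r a A g ∧
    (∀ i, MvPowerSeries.coeff (exponent K n r a (g i)) (g i) = 1) ∧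
    ∀ i, ∀ α ∈ supp K n (g i - leadMon K n r a (g i)),
      (MvPowerSeries.monomial α (1 : K)) ∉
        closedAdjoin K n (Set.range fun j => leadMon K n r a (g j))

/-- A power series is a (nonzero) monomial. -/
def IsMonomial (g : MvPowerSeries (Fin n) K) : Prop :=
  ∃ (α : Fin n →₀ ℕ) (c : K), c ≠ 0 ∧ g = MvPowerSeries.monomial α c

variable {K n}

section Weight

variable {a : Fin n → ℝ}

lemma weight_add (α β : Fin n →₀ ℕ) : weight n a (α + β) = weight n a α + weight n a β := by
  simp [weight, mul_add, Finset.sum_add_distrib]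

lemma finite_setOf_weight_le (ha : ∀ i, 0 < a i) (C : ℝ) :
    {α : Fin n →₀ ℕ | weight n a α ≤ C}.Finite := by
  refine (Set.finite_Iic (Finsupp.equivFunOnFinite.symm fun i => ⌈C / a i⌉₊)).subset ?_
  intro α hα i
  have hi : a i * α i ≤ weight n a α :=
    Finset.single_le_sum (f := fun j => a j * (α j : ℝ))
      (fun j _ => mul_nonneg (ha j).le (Nat.cast_nonneg _)) (Finset.mem_univ i)
  have : (α i : ℝ) ≤ C / a i := by
    rw [le_div_iff₀ (ha i), mul_comm]
    exact hi.trans hα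
  exact_mod_cast this.trans (Nat.le_ceil _)

end Weight

section WeightComponent

def weightComponent (a : Fin n → ℝ) (w : ℝ) :
    MvPowerSeries (Fin n) K →ₗ[K] MvPowerSeries (Fin n) K where
  toFun p γ := if weight n a γ = w then coeff γ p else 0
  map_add' p q := by
    funext γ
    show (if weight n a γ = w then coeff γ (p + q) else 0) =
      (if weight n a γ = w then coeff γ p else 0) + (if weight n a γ = w then coeff γ q else 0)
    split_ifs <;> simp
  map_smul' c p := by
    funext γ
    show (if weight n a γ = w then coeff γ (c • p) else 0) =
      c * (if weight n a γ = w then coeff γ p else 0)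
    split_ifs <;> simp

def vanishingBelow (a : Fin n → ℝ) (w : ℝ) : Submodule K (MvPowerSeries (Fin n) K) where
  carrier := {p | ∀ γ, weight n a γ < w → coeff γ p = 0}
  add_mem' hp hq γ hγ := by rw [map_add, hp γ hγ, hq γ hγ, add_zero]
  zero_mem' γ _ := map_zero _
  smul_mem' c p hp γ hγ := by rw [map_smul, hp γ hγ, smul_zero]

variable {a : Fin n → ℝ}

lemma coeff_weightComponent (w : ℝ) (p : MvPowerSeries (Fin n) K) (γ : Fin n →₀ ℕ) :
    coeff γ (weightComponent a w p) = if weight n a γ = w then coeff γ p else 0 :=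
  rfl

lemma weight_eq_of_mem_supp_weightComponent {w : ℝ} {p : MvPowerSeries (Fin n) K}
    {γ : Fin n →₀ ℕ} (hγ : γ ∈ supp K n (weightComponent a w p)) : weight n a γ = w := by
  by_contra hw
  exact hγ (by rw [coeff_weightComponent, if_neg hw])

lemma weightComponent_weightComponent_self (w : ℝ) (p : MvPowerSeries (Fin n) K) :
    weightComponent a w (weightComponent a w p) = weightComponent a w p := by
  ext γ; simp only [coeff_weightComponent]; split_ifs <;> rfl

lemma weightComponent_weightComponent_of_ne {v w : ℝ} (h : w ≠ v) (p : MvPowerSeries (Fin n) K) :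
    weightComponent a w (weightComponent a v p) = 0 := by
  ext γ; simp only [coeff_weightComponent, map_zero]; split_ifs <;> simp_all

lemma weightComponent_monomial (β : Fin n →₀ ℕ) (c : K) :
    weightComponent a (weight n a β) (monomial β c) = monomial β c := by
  ext γ; simp only [coeff_weightComponent, coeff_monomial]; split_ifs <;> simp_all

lemma exists_add_eq_of_coeff_mul_ne_zero {p q : MvPowerSeries (Fin n) K} {γ : Fin n →₀ ℕ}
    (h : coeff γ (p * q) ≠ 0) : ∃ β δ, β + δ = γ ∧ coeff β p ≠ 0 ∧ coeff δ q ≠ 0 := by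
  rw [coeff_mul] at h
  obtain ⟨x, hx, hne⟩ := Finset.exists_ne_zero_of_sum_ne_zero h
  exact ⟨x.1, x.2, Finset.HasAntidiagonal.mem_antidiagonal.mp hx, left_ne_zero_of_mul hne,
    right_ne_zero_of_mul hne⟩

lemma mul_mem_vanishingBelow {u v : ℝ} {p q : MvPowerSeries (Fin n) K}
    (hp : p ∈ vanishingBelow a u) (hq : q ∈ vanishingBelow a v) :
    p * q ∈ vanishingBelow a (u + v) := by
  intro γ hγ
  by_contra hne
  obtain ⟨β, δ, rfl, hβ, hδ⟩ := exists_add_eq_of_coeff_mul_ne_zero hne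
  rw [weight_add] at hγ
  have := not_lt.mp (mt (hp β) hβ)
  have := not_lt.mp (mt (hq δ) hδ)
  linarith

lemma weightComponent_mul {u v : ℝ} {p q : MvPowerSeries (Fin n) K}
    (hp : p ∈ vanishingBelow a u) (hq : q ∈ vanishingBelow a v) :
    weightComponent a (u + v) (p * q) = weightComponent a u p * weightComponent a v q := by
  ext γ
  rw [coeff_weightComponent, coeff_mul, coeff_mul, Finset.ite_sum_zero, Finset.sum_congr rfl]
  rintro ⟨β, δ⟩ hβδ
  rw [Finset.HasAntidiagonal.mem_antidiagonal] at hβδ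
  subst hβδ
  simp only [coeff_weightComponent, weight_add]
  by_cases hβ : weight n a β < u
  · simp [hp β hβ, hβ.ne]
  by_cases hδ : weight n a δ < v
  · simp [hq δ hδ, hδ.ne]
  by_cases hβδ : weight n a β = u ∧ weight n a δ = v
  · simp [hβδ.1, hβδ.2]
  · have hsum : weight n a β + weight n a δ ≠ u + v := fun h =>
      hβδ ⟨by linarith [not_lt.mp hβ, not_lt.mp hδ], by linarith [not_lt.mp hβ, not_lt.mp hδ]⟩
    rw [if_neg hsum]
    split_ifs <;> simp_all

end WeightComponent

section InitialForm

variable {a : Fin n → ℝ}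

lemma coeff_initialForm (f : MvPowerSeries (Fin n) K) (γ : Fin n →₀ ℕ) :
    coeff γ (initialForm K n a f) =
      if ((weight n a γ : ℝ) : EReal) = nu K n a f then coeff γ f else 0 :=
  rfl

lemma nu_eq_of_isLeast {f : MvPowerSeries (Fin n) K} {v : ℝ}
    (h : IsLeast (weight n a '' supp K n f) v) : nu K n a f = v := by
  rw [nu, ← Set.image_image (fun x : ℝ => (x : EReal))]
  exact (EReal.coe_strictMono.monotone.map_isLeast h).csInf_eq

lemma exists_isLeast_weight (ha : ∀ i, 0 < a i) {f : MvPowerSeries (Fin n) K} (hf : f ≠ 0) :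
    ∃ v, IsLeast (weight n a '' supp K n f) v := by
  obtain ⟨α₀, hα₀⟩ := (ne_zero_iff_exists_coeff_ne_zero f).mp hf
  let S := supp K n f ∩ {α | weight n a α ≤ weight n a α₀}
  have hα₀S : α₀ ∈ S := ⟨hα₀, le_refl (weight n a α₀)⟩
  obtain ⟨β, ⟨hβ, -⟩, hmin⟩ := Set.exists_min_image S (weight n a)
    ((finite_setOf_weight_le ha _).subset Set.inter_subset_right) ⟨α₀, hα₀S⟩
  refine ⟨weight n a β, ⟨β, hβ, rfl⟩, ?_⟩
  rintro _ ⟨α, hα, rfl⟩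
  by_cases hle : weight n a α ≤ weight n a α₀
  · exact hmin α ⟨hα, hle⟩
  · exact (hmin α₀ hα₀S).trans (not_le.mp hle).le

lemma initialForm_eq_weightComponent {f : MvPowerSeries (Fin n) K} {v : ℝ}
    (h : IsLeast (weight n a '' supp K n f) v) :
    initialForm K n a f = weightComponent a v f := by
  ext γ
  simp only [coeff_weightComponent, coeff_initialForm, nu_eq_of_isLeast h, EReal.coe_eq_coe_iff]

lemma mem_vanishingBelow_of_isLeast {f : MvPowerSeries (Fin n) K} {v : ℝ}
    (h : IsLeast (weight n a '' supp K n f) v) : f ∈ vanishingBelow a v := fun γ hγ => by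
  by_contra hne
  exact (h.2 ⟨γ, hne, rfl⟩).not_gt hγ

lemma initialForm_eq_weightComponent_of_mem_vanishingBelow {f : MvPowerSeries (Fin n) K}
    {w : ℝ} (hf : f ∈ vanishingBelow a w) (hne : weightComponent a w f ≠ 0) :
    initialForm K n a f = weightComponent a w f := by
  refine initialForm_eq_weightComponent ⟨?_, ?_⟩
  · obtain ⟨γ, hγ⟩ := (ne_zero_iff_exists_coeff_ne_zero _).mp hne
    have hw := weight_eq_of_mem_supp_weightComponent hγ
    rw [coeff_weightComponent, if_pos hw] at hγ
    exact ⟨γ, hγ, hw⟩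
  · rintro _ ⟨γ, hγ, rfl⟩
    exact not_lt.mp (mt (hf γ) hγ)

lemma initialForm_zero : initialForm K n a 0 = 0 := by
  ext γ
  rw [coeff_initialForm]
  split_ifs <;> simp

lemma coeff_initialForm_of_ne_zero {f : MvPowerSeries (Fin n) K} {γ : Fin n →₀ ℕ}
    (h : coeff γ (initialForm K n a f) ≠ 0) : coeff γ (initialForm K n a f) = coeff γ f := by
  rw [coeff_initialForm] at h ⊢
  split_ifs at h ⊢
  · rfl
  · exact absurd rfl h

lemma initialForm_ne_zero (ha : ∀ i, 0 < a i) {f : MvPowerSeries (Fin n) K} (hf : f ≠ 0) :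
    initialForm K n a f ≠ 0 := by
  obtain ⟨v, hv⟩ := exists_isLeast_weight ha hf
  obtain ⟨β, hβ, hβv⟩ := hv.1
  rw [initialForm_eq_weightComponent hv, ne_eq, MvPowerSeries.ext_iff, not_forall]
  refine ⟨β, ?_⟩
  rw [coeff_weightComponent, if_pos hβv, map_zero]
  exact hβ

lemma initialForm_mul (ha : ∀ i, 0 < a i) (f g : MvPowerSeries (Fin n) K) :
    initialForm K n a (f * g) = initialForm K n a f * initialForm K n a g := by
  rcases eq_or_ne f 0 with rfl | hf
  · simp [initialForm_zero]
  rcases eq_or_ne g 0 with rfl | hg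
  · simp [initialForm_zero]
  obtain ⟨u, hu⟩ := exists_isLeast_weight ha hf
  obtain ⟨v, hv⟩ := exists_isLeast_weight ha hg
  have hfu := mem_vanishingBelow_of_isLeast hu
  have hgv := mem_vanishingBelow_of_isLeast hv
  have hcomp : weightComponent a (u + v) (f * g) = initialForm K n a f * initialForm K n a g := by
    rw [weightComponent_mul hfu hgv, initialForm_eq_weightComponent hu,
      initialForm_eq_weightComponent hv]
  rw [← hcomp]
  refine initialForm_eq_weightComponent_of_mem_vanishingBelow (mul_mem_vanishingBelow hfu hgv) ?_
  rw [hcomp]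
  exact mul_ne_zero (initialForm_ne_zero ha hf) (initialForm_ne_zero ha hg)

lemma initialForm_smul (c : K) (f : MvPowerSeries (Fin n) K) :
    initialForm K n a (c • f) = c • initialForm K n a f := by
  rcases eq_or_ne c 0 with rfl | hc
  · simp [initialForm_zero]
  have hsupp : supp K n (c • f) = supp K n f := by ext γ; simp [supp, hc]
  ext γ
  rw [coeff_initialForm, nu, hsupp, ← nu, map_smul, map_smul, coeff_initialForm]
  split_ifs <;> simp

lemma initialForm_one : initialForm K n a 1 = 1 := by
  have hsupp : supp K n (1 : MvPowerSeries (Fin n) K) = {0} := by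
    ext γ; simp [supp, coeff_one]
  have h : IsLeast (weight n a '' supp K n 1) 0 := by
    simp [hsupp, weight, isLeast_singleton]
  ext γ
  rw [initialForm_eq_weightComponent h, coeff_weightComponent, coeff_one]
  split_ifs with hw hγ hγ <;> simp_all [weight]

end InitialForm

section ClosedAdjoin

lemma subset_closedAdjoin (S : Set (MvPowerSeries (Fin n) K)) :
    S ⊆ closedAdjoin K n S := fun s hs N =>
  ⟨s, Algebra.subset_adjoin hs, by rw [sub_self]; exact zero_mem _⟩

lemma closedAdjoin_le {S T : Set (MvPowerSeries (Fin n) K)} (h : S ⊆ closedAdjoin K n T) :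
    closedAdjoin K n S ≤ closedAdjoin K n T := by
  intro f hf N
  obtain ⟨p, hp, hfp⟩ := hf N
  obtain ⟨q, hq, hpq⟩ := Algebra.adjoin_le h hp N
  exact ⟨q, hq, by simpa using add_mem hfp hpq⟩

lemma le_order_of_mem_mIdeal_pow {N : ℕ} {f : MvPowerSeries (Fin n) K}
    (hf : f ∈ mIdeal K n ^ N) : (N : ℕ∞) ≤ f.order := by
  induction N generalizing f with
  | zero => simp
  | succ N ih =>
    rw [pow_succ] at hf
    refine Submodule.mul_induction_on hf (fun x hx y hy => ?_) (fun x y hx hy => ?_)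
    · have hy1 : 1 ≤ y.order := by
        rw [one_le_order_iff_constCoeff_eq_zero]
        refine (Ideal.span_le (I := RingHom.ker constantCoeff)).mpr ?_ hy
        rintro _ ⟨i, rfl⟩
        exact constantCoeff_X i
      calc ((N + 1 : ℕ) : ℕ∞) = N + 1 := by norm_cast
        _ ≤ x.order + y.order := add_le_add (ih hx) hy1
        _ ≤ (x * y).order := le_order_mul
    · exact (le_min hx hy).trans min_order_le_add

lemma coeff_eq_of_sub_mem_mIdeal_pow {N : ℕ} {f g : MvPowerSeries (Fin n) K}
    (h : f - g ∈ mIdeal K n ^ N) {d : Fin n →₀ ℕ} (hd : d.degree < N) :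
    coeff d f = coeff d g := by
  rw [← sub_eq_zero, ← map_sub]
  exact coeff_of_lt_order ((Nat.cast_lt.mpr hd).trans_le (le_order_of_mem_mIdeal_pow h))

end ClosedAdjoin

section InitialForms

/-- Unlike the set of all initial forms of `A`, this is a `K`-subspace; its nonzero elements are
exactly the initial forms of weight `w` of elements of `A`. -/
def initialFormsOfWeight (a : Fin n → ℝ) (A : Subalgebra K (MvPowerSeries (Fin n) K)) (w : ℝ) :
    Submodule K (MvPowerSeries (Fin n) K) :=
  (Subalgebra.toSubmodule A ⊓ vanishingBelow a w).map (weightComponent a w)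

variable {a : Fin n → ℝ}

def initialFormSubmonoid (ha : ∀ i, 0 < a i) (A : Subalgebra K (MvPowerSeries (Fin n) K)) :
    Submonoid (MvPowerSeries (Fin n) K) where
  carrier := {q | ∃ f ∈ A, initialForm K n a f = q}
  one_mem' := ⟨1, A.one_mem, initialForm_one⟩
  mul_mem' := by
    rintro _ _ ⟨f, hf, rfl⟩ ⟨g, hg, rfl⟩
    exact ⟨f * g, A.mul_mem hf hg, initialForm_mul ha f g⟩

lemma smul_mem_initialFormSubmonoid (ha : ∀ i, 0 < a i)
    {A : Subalgebra K (MvPowerSeries (Fin n) K)} (c : K) {q : MvPowerSeries (Fin n) K}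
    (hq : q ∈ initialFormSubmonoid ha A) : c • q ∈ initialFormSubmonoid ha A := by
  obtain ⟨f, hf, rfl⟩ := hq
  exact ⟨c • f, A.smul_mem hf c, initialForm_smul c f⟩

lemma exists_initialForm_eq_of_mem_initialFormsOfWeight
    {A : Subalgebra K (MvPowerSeries (Fin n) K)} {w : ℝ} {q : MvPowerSeries (Fin n) K}
    (hq : q ∈ initialFormsOfWeight a A w) : ∃ f ∈ A, initialForm K n a f = q := by
  obtain ⟨f, ⟨hfA, hfw⟩, rfl⟩ := hq
  rcases eq_or_ne (weightComponent a w f) 0 with h0 | hne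
  · exact ⟨0, A.zero_mem, by rw [initialForm_zero, h0]⟩
  · exact ⟨f, hfA, initialForm_eq_weightComponent_of_mem_vanishingBelow hfw hne⟩

lemma weightComponent_initialForm_mem_initialFormsOfWeight (ha : ∀ i, 0 < a i)
    {A : Subalgebra K (MvPowerSeries (Fin n) K)} {f : MvPowerSeries (Fin n) K} (hf : f ∈ A)
    (w : ℝ) : weightComponent a w (initialForm K n a f) ∈ initialFormsOfWeight a A w := by
  rcases eq_or_ne f 0 with rfl | hf0
  · rw [initialForm_zero, map_zero]
    exact zero_mem _
  obtain ⟨v, hv⟩ := exists_isLeast_weight ha hf0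
  rw [initialForm_eq_weightComponent hv]
  rcases eq_or_ne w v with rfl | hwv
  · rw [weightComponent_weightComponent_self]
    exact ⟨f, ⟨hf, mem_vanishingBelow_of_isLeast hv⟩, rfl⟩
  · rw [weightComponent_weightComponent_of_ne hwv]
    exact zero_mem _

lemma weightComponent_mem_initialFormsOfWeight_of_mem_adjoin (ha : ∀ i, 0 < a i)
    {A : Subalgebra K (MvPowerSeries (Fin n) K)} {p : MvPowerSeries (Fin n) K}
    (hp : p ∈ Algebra.adjoin K {q | ∃ f ∈ A, f ≠ 0 ∧ initialForm K n a f = q}) (w : ℝ) :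
    weightComponent a w p ∈ initialFormsOfWeight a A w := by
  rw [← Subalgebra.mem_toSubmodule, Algebra.adjoin_eq_span] at hp
  have hclosure : Submonoid.closure {q | ∃ f ∈ A, f ≠ 0 ∧ initialForm K n a f = q} ≤
      initialFormSubmonoid ha A :=
    Submonoid.closure_le.mpr fun _ ⟨f, hf, _, hq⟩ => ⟨f, hf, hq⟩
  have hspan : Submodule.span K (initialFormSubmonoid ha A : Set _) ≤
      (initialFormsOfWeight a A w).comap (weightComponent a w) :=
    Submodule.span_le.mpr fun _ ⟨f, hf, hq⟩ =>
      hq ▸ weightComponent_initialForm_mem_initialFormsOfWeight ha hf w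
  exact hspan (Submodule.span_mono hclosure hp)

lemma exists_weightComponent_eq_of_mem_closedAdjoin (ha : ∀ i, 0 < a i)
    {S : Set (MvPowerSeries (Fin n) K)} {q : MvPowerSeries (Fin n) K}
    (hq : q ∈ closedAdjoin K n S) (w : ℝ) :
    ∃ p ∈ Algebra.adjoin K S, weightComponent a w p = weightComponent a w q := by
  obtain ⟨N, hN⟩ := ((finite_setOf_weight_le ha w).image Finsupp.degree).bddAbove
  obtain ⟨p, hp, hqp⟩ := hq (N + 1)
  refine ⟨p, hp, ?_⟩
  ext γ
  rw [coeff_weightComponent, coeff_weightComponent]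
  split_ifs with hγ
  · exact (coeff_eq_of_sub_mem_mIdeal_pow hqp (Nat.lt_succ_of_le (hN ⟨γ, hγ.le, rfl⟩))).symm
  · rfl

theorem exists_initialForm_eq_weightComponent (ha : ∀ i, 0 < a i)
    {A : Subalgebra K (MvPowerSeries (Fin n) K)} {q : MvPowerSeries (Fin n) K}
    (hq : q ∈ inAlgebra K n a A) (w : ℝ) :
    ∃ f ∈ A, initialForm K n a f = weightComponent a w q := by
  obtain ⟨p, hp, hpq⟩ := exists_weightComponent_eq_of_mem_closedAdjoin ha hq w
  rw [← hpq]
  exact exists_initialForm_eq_of_mem_initialFormsOfWeight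
    (weightComponent_mem_initialFormsOfWeight_of_mem_adjoin ha hp w)

end InitialForms

section Monomials

lemma monomial_one_eq_inv_smul {c : K} (hc : c ≠ 0) (γ : Fin n →₀ ℕ) :
    monomial γ (1 : K) = c⁻¹ • monomial γ c := by
  rw [← map_smul, smul_eq_mul, inv_mul_cancel₀ hc]

lemma monomial_one_mem_of_mem_closure (M : Submonoid (MvPowerSeries (Fin n) K))
    {E : Set (Fin n →₀ ℕ)} (hE : ∀ γ ∈ E, monomial γ (1 : K) ∈ M) {β : Fin n →₀ ℕ}
    (hβ : β ∈ AddSubmonoid.closure E) : monomial β (1 : K) ∈ M := by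
  induction hβ using AddSubmonoid.closure_induction with
  | mem γ hγ => exact hE γ hγ
  | zero => rw [monomial_zero_one]; exact M.one_mem
  | add β δ _ _ hβ hδ =>
    rw [← one_mul (1 : K), ← monomial_mul_monomial]
    exact M.mul_mem hβ hδ

variable (K) in
def supportedOn (M : AddSubmonoid (Fin n →₀ ℕ)) : Subalgebra K (MvPowerSeries (Fin n) K) where
  carrier := {p | supp K n p ⊆ M}
  mul_mem' {p q} hp hq γ hγ := by
    obtain ⟨β, δ, rfl, hβ, hδ⟩ := exists_add_eq_of_coeff_mul_ne_zero hγ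
    exact M.add_mem (hp hβ) (hq hδ)
  add_mem' {p q} hp hq γ hγ := by
    by_cases h : coeff γ p = 0
    · exact hq fun h0 => hγ (by rw [map_add, h, h0, add_zero])
    · exact hp h
  algebraMap_mem' c γ hγ := by
    have h : coeff γ (C c : MvPowerSeries (Fin n) K) ≠ 0 := hγ
    rw [coeff_C] at h
    split_ifs at h with h0
    · exact h0 ▸ M.zero_mem
    · exact absurd rfl h

lemma monomial_mem_supportedOn {M : AddSubmonoid (Fin n →₀ ℕ)} {γ : Fin n →₀ ℕ} (hγ : γ ∈ M)
    (c : K) : monomial γ c ∈ supportedOn K M := fun β hβ => by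
  have h : coeff β (monomial γ c) ≠ 0 := hβ
  rw [coeff_monomial] at h
  split_ifs at h with hβγ
  · exact hβγ ▸ hγ
  · exact absurd rfl h

lemma closedAdjoin_le_supportedOn {M : AddSubmonoid (Fin n →₀ ℕ)}
    {S : Set (MvPowerSeries (Fin n) K)} (hS : S ⊆ supportedOn K M) :
    closedAdjoin K n S ≤ supportedOn K M := by
  intro q hq α hα
  obtain ⟨p, hp, hqp⟩ := hq (α.degree + 1)
  have hpα : coeff α p ≠ 0 := coeff_eq_of_sub_mem_mIdeal_pow hqp (Nat.lt_succ_self _) ▸ hα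
  exact Algebra.adjoin_le hS hp hpα

lemma monomial_one_mem_closedAdjoin_of_mem_supp {T : Set (MvPowerSeries (Fin n) K)}
    (hT : ∀ t ∈ T, IsMonomial K n t) {q : MvPowerSeries (Fin n) K} (hq : q ∈ closedAdjoin K n T)
    {α : Fin n →₀ ℕ} (hα : α ∈ supp K n q) : monomial α (1 : K) ∈ closedAdjoin K n T := by
  let E := {γ : Fin n →₀ ℕ | monomial γ (1 : K) ∈ closedAdjoin K n T}
  have hTE : T ⊆ supportedOn K (AddSubmonoid.closure E) := by
    intro t ht
    obtain ⟨γ, c, hc, rfl⟩ := hT t ht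
    have hγ : γ ∈ E := by
      change monomial γ (1 : K) ∈ closedAdjoin K n T
      rw [monomial_one_eq_inv_smul hc]
      exact Subalgebra.smul_mem _ (subset_closedAdjoin T ht) _
    exact monomial_mem_supportedOn (AddSubmonoid.subset_closure hγ) c
  exact monomial_one_mem_of_mem_closure (closedAdjoin K n T).toSubmonoid (fun γ hγ => hγ)
    (closedAdjoin_le_supportedOn hTE hq hα)

end Monomials

section Exponent

variable {r : (Fin n →₀ ℕ) → (Fin n →₀ ℕ) → Prop} {a : Fin n → ℝ}

lemma supp_initialForm_finite (ha : ∀ i, 0 < a i) (f : MvPowerSeries (Fin n) K) :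
    (supp K n (initialForm K n a f)).Finite := by
  rcases eq_or_ne f 0 with rfl | hf
  · simp [initialForm_zero, supp]
  obtain ⟨v, hv⟩ := exists_isLeast_weight ha hf
  refine (finite_setOf_weight_le ha v).subset fun γ hγ => ?_
  rw [initialForm_eq_weightComponent hv] at hγ
  exact (weight_eq_of_mem_supp_weightComponent hγ).le

lemma weight_eq_nu_of_mem_supp_initialForm {f : MvPowerSeries (Fin n) K} {γ : Fin n →₀ ℕ}
    (hγ : γ ∈ supp K n (initialForm K n a f)) : ((weight n a γ : ℝ) : EReal) = nu K n a f := by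
  by_contra hw
  exact hγ (by rw [coeff_initialForm, if_neg hw])

lemma weightComponent_initialForm_of_mem_supp {f : MvPowerSeries (Fin n) K} {β : Fin n →₀ ℕ}
    (hβ : β ∈ supp K n (initialForm K n a f)) :
    weightComponent a (weight n a β) (initialForm K n a f) = initialForm K n a f := by
  ext γ
  rw [coeff_weightComponent]
  split_ifs with hγ
  · rfl
  · by_contra hne
    exact hγ (EReal.coe_injective ((weight_eq_nu_of_mem_supp_initialForm fun h => hne h.symm).trans
      (weight_eq_nu_of_mem_supp_initialForm hβ).symm))

lemma supp_sub_smul_monomial_one (p : MvPowerSeries (Fin n) K) (β : Fin n →₀ ℕ) :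
    supp K n (p - coeff β p • monomial β (1 : K)) = supp K n p \ {β} := by
  ext γ
  simp only [supp, Set.mem_ofPred_eq, Set.mem_sdiff, Set.mem_singleton_iff, map_sub, map_smul,
    coeff_monomial, smul_eq_mul]
  by_cases hγ : γ = β <;> simp [hγ]

lemma isMonomial_of_supp_subset {p : MvPowerSeries (Fin n) K} (hp : p ≠ 0) {β : Fin n →₀ ℕ}
    (h : ∀ α ∈ supp K n p, α = β) : IsMonomial K n p := by
  obtain ⟨γ, hγ⟩ := (ne_zero_iff_exists_coeff_ne_zero p).mp hp
  obtain rfl := h γ hγ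
  refine ⟨γ, coeff γ p, hγ, ?_⟩
  ext α
  rw [coeff_monomial]
  split_ifs with hα
  · rw [hα]
  · by_contra hne
    exact hα (h α hne)

lemma exponent_mem_supp_initialForm (hr : IsWellOrder (Fin n →₀ ℕ) r) (ha : ∀ i, 0 < a i)
    {f : MvPowerSeries (Fin n) K} (hf : f ≠ 0) :
    exponent K n r a f ∈ supp K n (initialForm K n a f) := by
  let := @IsWellOrder.linearOrder _ r hr
  have hfin := supp_initialForm_finite ha f
  have hne : hfin.toFinset.Nonempty := by
    obtain ⟨γ, hγ⟩ := (ne_zero_iff_exists_coeff_ne_zero _).mp (initialForm_ne_zero ha hf)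
    exact ⟨γ, hfin.mem_toFinset.mpr hγ⟩
  have hmax : ∃ β ∈ supp K n (initialForm K n a f),
      ∀ γ ∈ supp K n (initialForm K n a f), γ = β ∨ r γ β :=
    ⟨hfin.toFinset.max' hne, hfin.mem_toFinset.mp (Finset.max'_mem _ _),
      fun γ hγ => Finset.le_max' _ γ (hfin.mem_toFinset.mpr hγ)⟩
  rw [exponent, dif_pos hmax]
  exact hmax.choose_spec.1

lemma coeff_exponent_ne_zero (hr : IsWellOrder (Fin n →₀ ℕ) r) (ha : ∀ i, 0 < a i)
    {f : MvPowerSeries (Fin n) K} (hf : f ≠ 0) : coeff (exponent K n r a f) f ≠ 0 := by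
  have h := exponent_mem_supp_initialForm hr ha hf
  rwa [supp, Set.mem_ofPred_eq, coeff_initialForm_of_ne_zero h] at h

lemma exponent_eq_of_initialForm_eq_monomial {f : MvPowerSeries (Fin n) K} {β : Fin n →₀ ℕ}
    {c : K} (hc : c ≠ 0) (h : initialForm K n a f = monomial β c) : exponent K n r a f = β := by
  have hsupp : ∀ γ ∈ supp K n (initialForm K n a f), γ = β := fun γ hγ => by
    by_contra hγβ
    exact hγ (by rw [h, coeff_monomial, if_neg hγβ])
  have hβ : β ∈ supp K n (initialForm K n a f) := by
    change coeff β (initialForm K n a f) ≠ 0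
    rwa [h, coeff_monomial_same]
  have hmax : ∃ β' ∈ supp K n (initialForm K n a f),
      ∀ γ ∈ supp K n (initialForm K n a f), γ = β' ∨ r γ β' :=
    ⟨β, hβ, fun γ hγ => Or.inl (hsupp γ hγ)⟩
  rw [exponent, dif_pos hmax]
  exact hsupp _ hmax.choose_spec.1

lemma leadMon_eq_of_initialForm_eq_monomial {f : MvPowerSeries (Fin n) K} {β : Fin n →₀ ℕ}
    {c : K} (hc : c ≠ 0) (h : initialForm K n a f = monomial β c) :
    leadMon K n r a f = monomial β c := by
  have hcoeff : coeff β (initialForm K n a f) = c := by rw [h, coeff_monomial_same]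
  rw [leadMon, exponent_eq_of_initialForm_eq_monomial hc h,
    ← coeff_initialForm_of_ne_zero (hcoeff ▸ hc), hcoeff]

end Exponent

section Multihomogeneous

variable {r : (Fin n →₀ ℕ) → (Fin n →₀ ℕ) → Prop} {a : Fin n → ℝ}
  {A : Subalgebra K (MvPowerSeries (Fin n) K)}

theorem isMonomial_initialForm_of_eq_closedAdjoin (ha : ∀ i, 0 < a i)
    {T : Set (MvPowerSeries (Fin n) K)} (hT : ∀ t ∈ T, IsMonomial K n t)
    (hAT : inAlgebra K n a A = closedAdjoin K n T) {g : MvPowerSeries (Fin n) K} (hgA : g ∈ A)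
    (hg0 : g ≠ 0)
    (hred : ∀ α ∈ supp K n (g - leadMon K n r a g), monomial α (1 : K) ∉ leadAlgebra K n r a A) :
    IsMonomial K n (initialForm K n a g) := by
  refine isMonomial_of_supp_subset (β := exponent K n r a g) (initialForm_ne_zero ha hg0)
    fun α hα => ?_
  by_contra hne
  have hαA : monomial α (1 : K) ∈ inAlgebra K n a A := by
    rw [hAT]
    refine monomial_one_mem_closedAdjoin_of_mem_supp hT ?_ hα
    rw [← hAT]
    exact subset_closedAdjoin _ ⟨g, hgA, hg0, rfl⟩
  obtain ⟨h, hhA, hh⟩ := exists_initialForm_eq_weightComponent ha hαA (weight n a α)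
  rw [weightComponent_monomial] at hh
  have hh0 : h ≠ 0 := by
    rintro rfl
    simpa [initialForm_zero] using congrArg (coeff α) hh
  refine hred α ?_ ?_
  · change coeff α (g - leadMon K n r a g) ≠ 0
    rwa [map_sub, leadMon, coeff_monomial, if_neg hne, sub_zero,
      ← coeff_initialForm_of_ne_zero hα]
  · rw [← leadMon_eq_of_initialForm_eq_monomial one_ne_zero hh]
    exact subset_closedAdjoin _ ⟨h, hhA, hh0, rfl⟩

/-- Induction on the number of terms of `in(f,a)`: if `in(P,a) = x^β` with `β = exp(f,a)`, then
`in(f,a) - c x^β` is the initial form of `f - c P` or of `0`, and has one term less. -/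
theorem initialForm_mem_of_forall_exponent_mem (hr : IsWellOrder (Fin n →₀ ℕ) r)
    (ha : ∀ i, 0 < a i) {B : Subalgebra K (MvPowerSeries (Fin n) K)} {E : Set (Fin n →₀ ℕ)}
    (hexp : ∀ f ∈ A, f ≠ 0 → exponent K n r a f ∈ E)
    (hEA : ∀ β ∈ E, monomial β (1 : K) ∈ initialFormSubmonoid ha A)
    (hEB : ∀ β ∈ E, monomial β (1 : K) ∈ B) {f : MvPowerSeries (Fin n) K} (hf : f ∈ A) :
    initialForm K n a f ∈ B := by
  induction hk : (supp K n (initialForm K n a f)).ncard using Nat.strong_induction_on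
    generalizing f with
  | _ k ih =>
  rcases eq_or_ne f 0 with rfl | hf0
  · rw [initialForm_zero]
    exact B.zero_mem
  set β := exponent K n r a f
  set c := coeff β (initialForm K n a f)
  have hβ := exponent_mem_supp_initialForm hr ha hf0
  have hβE := hexp f hf hf0
  obtain ⟨f', hf'A, hf'⟩ : ∃ f' ∈ A,
      initialForm K n a f' = initialForm K n a f - c • monomial β (1 : K) := by
    obtain ⟨P, hPA, hP⟩ := hEA β hβE
    have hcomp : initialForm K n a f - c • monomial β (1 : K) =
        weightComponent a (weight n a β) (initialForm K n a f) -
          weightComponent a (weight n a β) (initialForm K n a (c • P)) := by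
      rw [weightComponent_initialForm_of_mem_supp hβ, initialForm_smul, hP, map_smul,
        weightComponent_monomial]
    rw [hcomp]
    exact exists_initialForm_eq_of_mem_initialFormsOfWeight
      (sub_mem (weightComponent_initialForm_mem_initialFormsOfWeight ha hf _)
        (weightComponent_initialForm_mem_initialFormsOfWeight ha (A.smul_mem hPA c) _))
  have hlt : (supp K n (initialForm K n a f')).ncard < k := by
    rw [hf', supp_sub_smul_monomial_one, ← hk]
    exact Set.ncard_sdiff_singleton_lt_of_mem hβ (supp_initialForm_finite ha f)
  have hsum : initialForm K n a f = initialForm K n a f' + c • monomial β (1 : K) := by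
    rw [hf', sub_add_cancel]
  rw [hsum]
  exact B.add_mem (ih _ hlt hf'A rfl) (B.smul_mem (hEB β hβE) c)

lemma exponent_mem_closure_of_leadAlgebra_eq (hr : IsWellOrder (Fin n →₀ ℕ) r)
    (ha : ∀ i, 0 < a i) {m : ℕ} {g : Fin m → MvPowerSeries (Fin n) K}
    (hlead : leadAlgebra K n r a A = closedAdjoin K n (Set.range fun i => leadMon K n r a (g i)))
    {f : MvPowerSeries (Fin n) K} (hf : f ∈ A) (hf0 : f ≠ 0) :
    exponent K n r a f ∈ AddSubmonoid.closure (Set.range fun i => exponent K n r a (g i)) := by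
  have hmon : leadMon K n r a f ∈ leadAlgebra K n r a A :=
    subset_closedAdjoin _ ⟨f, hf, hf0, rfl⟩
  rw [hlead] at hmon
  refine closedAdjoin_le_supportedOn ?_ hmon ?_
  · rintro _ ⟨i, rfl⟩
    exact monomial_mem_supportedOn (AddSubmonoid.subset_closure (Set.mem_range_self i)) _
  · change coeff _ (monomial _ _) ≠ 0
    rw [coeff_monomial_same]
    exact coeff_exponent_ne_zero hr ha hf0

theorem inAlgebra_eq_closedAdjoin_initialForm (hr : IsWellOrder (Fin n →₀ ℕ) r)
    (ha : ∀ i, 0 < a i) {m : ℕ} {g : Fin m → MvPowerSeries (Fin n) K}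
    (hgA : ∀ i, g i ∈ A ∧ g i ≠ 0)
    (hlead : leadAlgebra K n r a A = closedAdjoin K n (Set.range fun i => leadMon K n r a (g i)))
    (hI : ∀ i, IsMonomial K n (initialForm K n a (g i))) :
    inAlgebra K n a A = closedAdjoin K n (Set.range fun i => initialForm K n a (g i)) := by
  set E := AddSubmonoid.closure (Set.range fun i => exponent K n r a (g i))
  have hexp : ∀ f ∈ A, f ≠ 0 → exponent K n r a f ∈ E := fun f hf hf0 =>
    exponent_mem_closure_of_leadAlgebra_eq hr ha hlead hf hf0
  have hgen : ∀ i, ∃ c : K,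
      monomial (exponent K n r a (g i)) (1 : K) = c • initialForm K n a (g i) := by
    intro i
    obtain ⟨e, c, hc, he⟩ := hI i
    exact ⟨c⁻¹, by rw [exponent_eq_of_initialForm_eq_monomial hc he, he,
      monomial_one_eq_inv_smul hc]⟩
  have hEA : ∀ β ∈ E, monomial β (1 : K) ∈ initialFormSubmonoid ha A := by
    refine fun β => monomial_one_mem_of_mem_closure _ ?_
    rintro _ ⟨i, rfl⟩
    obtain ⟨c, hc⟩ := hgen i
    exact hc ▸ smul_mem_initialFormSubmonoid ha c ⟨g i, (hgA i).1, rfl⟩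
  have hEB : ∀ β ∈ E, monomial β (1 : K) ∈
      closedAdjoin K n (Set.range fun i => initialForm K n a (g i)) := by
    refine fun β => monomial_one_mem_of_mem_closure (closedAdjoin K n _).toSubmonoid ?_
    rintro _ ⟨i, rfl⟩
    obtain ⟨c, hc⟩ := hgen i
    exact hc ▸ Subalgebra.smul_mem _ (subset_closedAdjoin _ (Set.mem_range_self i)) c
  refine le_antisymm (closedAdjoin_le ?_) (closedAdjoin_le ?_)
  · rintro _ ⟨f, hf, -, rfl⟩
    exact initialForm_mem_of_forall_exponent_mem hr ha hexp hEA hEB hf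
  · rintro _ ⟨i, rfl⟩
    exact subset_closedAdjoin _ ⟨g i, (hgA i).1, (hgA i).2, rfl⟩

end Multihomogeneous

theorem multihomogeneous_iff_general
    (r : (Fin n →₀ ℕ) → (Fin n →₀ ℕ) → Prop) (hr : IsWellOrder (Fin n →₀ ℕ) r)
    (A : Subalgebra K (MvPowerSeries (Fin n) K))
    (a : Fin n → ℝ) (ha : ∀ i, 0 < a i)
    (m : ℕ) (g : Fin m → MvPowerSeries (Fin n) K)
    (hg : IsReducedCanonicalBasis K n r a A g) :
    (∃ T : Set (MvPowerSeries (Fin n) K), (∀ g' ∈ T, IsMonomial K n g') ∧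
      inAlgebra K n a (A : Set (MvPowerSeries (Fin n) K)) = closedAdjoin K n T) ↔
    ∀ i, IsMonomial K n (initialForm K n a (g i)) := by
  obtain ⟨⟨⟨hgA, hlead⟩, -⟩, -, hred⟩ := hg
  constructor
  · rintro ⟨T, hT, hAT⟩ i
    exact isMonomial_initialForm_of_eq_closedAdjoin ha hT hAT (hgA i).1 (hgA i).2
      (hlead ▸ hred i)
  · intro hI
    exact ⟨_, Set.forall_mem_range.mpr hI,
      inAlgebra_eq_closedAdjoin_initialForm hr ha hgA hlead hI⟩

/-- `in(A,a)` is multihomogeneous iff each `in(g_i,a)` is a monomial, where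
`{g_1,…,g_r}` is an `a`-reduced canonical basis of `A`. -/
theorem multihomogeneous_iff
    (r : (Fin n →₀ ℕ) → (Fin n →₀ ℕ) → Prop) (hr : IsWellOrder (Fin n →₀ ℕ) r)
    (hradd : ∀ α β γ : Fin n →₀ ℕ, r α β → r (α + γ) (β + γ))
    (s : ℕ) (f : Fin s → MvPowerSeries (Fin n) K) (hf : ∀ i, f i ≠ 0)
    (A : Subalgebra K (MvPowerSeries (Fin n) K)) (hA : A = closedAdjoin K n (Set.range f))
    (hlen : FiniteColength K n A)
    (a : Fin n → ℝ) (ha : ∀ i, 0 < a i)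
    (m : ℕ) (g : Fin m → MvPowerSeries (Fin n) K)
    (hg : IsReducedCanonicalBasis K n r a A g) :
    (∃ T : Set (MvPowerSeries (Fin n) K), (∀ g' ∈ T, IsMonomial K n g') ∧
      inAlgebra K n a (A : Set (MvPowerSeries (Fin n) K)) = closedAdjoin K n T) ↔
    ∀ i, IsMonomial K n (initialForm K n a (g i)) :=
  multihomogeneous_iff_general r hr A a ha m g hg

end CanonicalFan
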